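/- arXiv:2411.19315 — 2 statements merged into one kernel-verified Lean document; each statement's English description precedes it below -/
import Mathlib

section
/- The set of bipartite density matrices on C^d ⊗ C^d with Schmidt number at most r is closed (hence compact, being a closed subset of the compact set of density matrices). -/
open Matrix BigOperators Kronecker
open scoped ComplexOrder

noncomputable section

/-- `id ⊗ Φ` acting on a bipartite matrix, with ancilla index type `a`. -/
def idTensor {a n : Type*} [Fintype n] (Φ : Matrix n n ℂ → Matrix n n ℂ)
    (ρ : Matrix (a × n) (a × n) ℂ) : Matrix (a × n) (a × n) ℂ :=
  Matrix.of fun p q => Φ (Matrix.of fun x y => ρ (p.1, x) (q.1, y)) p.2 q.2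

/-- `Φ ⊗ id` acting on a bipartite matrix. -/
def tensorId {n a : Type*} [Fintype n] (Φ : Matrix n n ℂ → Matrix n n ℂ)
    (ρ : Matrix (n × a) (n × a) ℂ) : Matrix (n × a) (n × a) ℂ :=
  Matrix.of fun p q => Φ (Matrix.of fun x y => ρ (x, p.2) (y, q.2)) p.1 q.1

/-- `Φ₁ ⊗ Φ₂` acting on a bipartite matrix. -/
def tensorChannel {n m : Type*} [Fintype n] [Fintype m]
    (Φ₁ : Matrix n n ℂ → Matrix n n ℂ) (Φ₂ : Matrix m m ℂ → Matrix m m ℂ)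
    (ρ : Matrix (n × m) (n × m) ℂ) : Matrix (n × m) (n × m) ℂ :=
  tensorId Φ₁ (idTensor Φ₂ ρ)

/-- The (normalized) Choi matrix `(id ⊗ Φ)(|φ⁺⟩⟨φ⁺|)` of a map `Φ`. -/
def Choi {n : Type*} [Fintype n] [DecidableEq n] (Φ : Matrix n n ℂ → Matrix n n ℂ) :
    Matrix (n × n) (n × n) ℂ :=
  Matrix.of fun p q => ((Fintype.card n : ℂ))⁻¹ * Φ (Matrix.single p.1 q.1 1) p.2 q.2

/-- A density matrix: positive semidefinite with unit trace. -/
def IsDensity {n : Type*} [Fintype n] (ρ : Matrix n n ℂ) : Prop :=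
  ρ.PosSemidef ∧ ρ.trace = 1

/-- A quantum channel: a completely positive trace-preserving linear map. -/
def IsChannel {n : Type*} [Fintype n] (Φ : Matrix n n ℂ → Matrix n n ℂ) : Prop :=
  IsLinearMap ℂ Φ ∧ (∀ ρ, (Φ ρ).trace = ρ.trace) ∧
    ∀ ρ : Matrix (n × n) (n × n) ℂ, ρ.PosSemidef → (idTensor Φ ρ).PosSemidef

/-- The Schmidt rank of a bipartite vector: the rank of its coefficient matrix. -/
def schmidtRank {n m : Type*} [Fintype n] [Fintype m] (ψ : n × m → ℂ) : ℕ :=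
  (Matrix.of fun i j => ψ (i, j)).rank

/-- `ρ` has Schmidt number at most `r`: it admits a decomposition into pure states
of Schmidt rank at most `r` with probability weights. -/
def SNle {n m : Type*} [Fintype n] [Fintype m] (r : ℕ)
    (ρ : Matrix (n × m) (n × m) ℂ) : Prop :=
  ∃ (N : ℕ) (p : Fin N → ℝ) (ψ : Fin N → n × m → ℂ),
    (∀ k, 0 ≤ p k) ∧ (∀ k, ∑ i, Complex.normSq (ψ k i) = 1) ∧
    (∀ k, schmidtRank (ψ k) ≤ r) ∧
    ρ = ∑ k, (p k : ℂ) • Matrix.vecMulVec (ψ k) (star (ψ k))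

/-- The depolarizing channel `ρ ↦ p ρ + ((1-p)/d) Tr(ρ) I`. -/
def Dep (d : ℕ) (p : ℝ) (ρ : Matrix (Fin d) (Fin d) ℂ) : Matrix (Fin d) (Fin d) ℂ :=
  (p : ℂ) • ρ + (((1 - p) / d : ℝ) : ℂ) • (ρ.trace • (1 : Matrix (Fin d) (Fin d) ℂ))

/-- The maximally entangled unit vector `|φ⁺⟩ = (1/√d) ∑ᵢ |ii⟩`. -/
def phiPlus (d : ℕ) : Fin d × Fin d → ℂ :=
  fun p => if p.1 = p.2 then (((Real.sqrt d)⁻¹ : ℝ) : ℂ) else 0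

/-- The projector onto the maximally entangled state. -/
def projPhi (d : ℕ) : Matrix (Fin d × Fin d) (Fin d × Fin d) ℂ :=
  Matrix.vecMulVec (phiPlus d) (star (phiPlus d))

/-- An `r`-positive map: `id_{M_r} ⊗ Λ` is a positive map. -/
def rPositive {n : Type*} [Fintype n] (r : ℕ) (Λ : Matrix n n ℂ → Matrix n n ℂ) : Prop :=
  IsLinearMap ℂ Λ ∧
    ∀ σ : Matrix (Fin r × n) (Fin r × n) ℂ, σ.PosSemidef → (idTensor Λ σ).PosSemidef

/-- The reduction-type map `Λ_k(X) = Tr(X) I - k X`. -/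
def redMap (d : ℕ) (k : ℝ) (X : Matrix (Fin d) (Fin d) ℂ) : Matrix (Fin d) (Fin d) ℂ :=
  X.trace • (1 : Matrix (Fin d) (Fin d) ℂ) - (k : ℂ) • X



lemma sum_fin_dite {M : Type*} [AddCommMonoid M] {r n' : ℕ} (h : n' ≤ r) (g : Fin n' → M) :
    (∑ k : Fin r, if hk : (k : ℕ) < n' then g ⟨k, hk⟩ else 0) = ∑ k : Fin n', g k := by
  have h1 : (∑ k : Fin r, if hk : (k : ℕ) < n' then g ⟨k, hk⟩ else 0)
      = ∑ k ∈ Finset.range r, (fun k => if hk : k < n' then g ⟨k, hk⟩ else 0) k :=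
    Fin.sum_univ_eq_sum_range (fun k => if hk : k < n' then g ⟨k, hk⟩ else 0) r
  have h2 : (∑ k : Fin n', g k)
      = ∑ k ∈ Finset.range n', (fun k => if hk : k < n' then g ⟨k, hk⟩ else 0) k := by
    rw [← Fin.sum_univ_eq_sum_range]
    exact Finset.sum_congr rfl fun k _ => by simp [k.isLt]
  rw [h1, h2]
  exact (Finset.sum_subset (Finset.range_subset_range.2 h)
    (fun x _ hx => dif_neg (by simpa using hx))).symm

lemma euclid_apply_le_norm {d : ℕ} (x : EuclideanSpace ℂ (Fin d)) (i : Fin d) :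
    ‖x i‖ ≤ ‖x‖ := by
  rw [EuclideanSpace.norm_eq]
  have : ‖x i‖ ^ 2 ≤ ∑ j, ‖x j‖ ^ 2 :=
    Finset.single_le_sum (f := fun j => ‖x j‖ ^ 2) (fun j _ => sq_nonneg _) (Finset.mem_univ i)
  calc ‖x i‖ = Real.sqrt (‖x i‖ ^ 2) := (Real.sqrt_sq (norm_nonneg _)).symm
    _ ≤ _ := Real.sqrt_le_sqrt this

lemma exists_bounded_factorization {d r : ℕ} (ψ : Fin d × Fin d → ℂ)
    (hnorm : ∑ i, Complex.normSq (ψ i) = 1) (hrank : schmidtRank ψ ≤ r) :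
    ∃ (B : Matrix (Fin d) (Fin r) ℂ) (C : Matrix (Fin r) (Fin d) ℂ),
      (∀ i k, ‖B i k‖ ≤ 1) ∧ (∀ k j, ‖C k j‖ ≤ 1) ∧
      ∀ i j, (B * C) i j = ψ (i, j) := by
  classical
  set E := EuclideanSpace ℂ (Fin d)
  set A : Matrix (Fin d) (Fin d) ℂ := Matrix.of fun i j => ψ (i, j) with hA
  set L := WithLp.linearEquiv 2 ℂ (Fin d → ℂ)
  set cA : Fin d → E := fun j => L.symm (fun i => A i j) with hcA
  set V : Submodule ℂ E := Submodule.span ℂ (Set.range cA) with hV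
  have hmem : ∀ j, cA j ∈ V := fun j => Submodule.subset_span ⟨j, rfl⟩
  set n' := Module.finrank ℂ V with hn'
  have hn'r : n' ≤ r := by
    have hmap : V.map (L : E ≃ₗ[ℂ] (Fin d → ℂ)).toLinearMap
        = Submodule.span ℂ (Set.range A.col) := by
      rw [hV, Submodule.map_span]
      congr 1
      ext f
      constructor
      · rintro ⟨_, ⟨j, rfl⟩, rfl⟩
        exact ⟨j, rfl⟩
      · rintro ⟨j, rfl⟩
        exact ⟨cA j, ⟨j, rfl⟩, rfl⟩
    have h1 : n' = A.rank := by
      rw [hn', Matrix.rank_eq_finrank_span_cols, ← hmap]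
      exact (LinearEquiv.finrank_map_eq _ _).symm
    rw [h1]
    exact hrank
  have : FiniteDimensional ℂ V := inferInstance
  set b := stdOrthonormalBasis ℂ V with hb
  have hbnorm : ∀ k, ‖((b k : V) : E)‖ = 1 := fun k => b.orthonormal.1 k
  have hrepr : ∀ j, cA j = ∑ k : Fin n', (inner (𝕜 := ℂ) ((b k : V) : E) (cA j)) • ((b k : V) : E) := by
    intro j
    have h := b.sum_repr' (⟨cA j, hmem j⟩ : V)
    have h2 := congrArg (Subtype.val) h.symm
    refine h2.trans ?_
    push_cast [Submodule.coe_sum]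
    exact Finset.sum_congr rfl fun k _ => by rw [Submodule.coe_inner]
  have hcAapply : ∀ j i, cA j i = ψ (i, j) := by
    intro j i
    show (WithLp.linearEquiv 2 ℂ (Fin d → ℂ)).symm (fun i => A i j) i = _
    rfl
  have hcAnorm : ∀ j, ‖cA j‖ ≤ 1 := by
    intro j
    rw [EuclideanSpace.norm_eq]
    rw [show (1:ℝ) = Real.sqrt 1 from (Real.sqrt_one).symm]
    apply Real.sqrt_le_sqrt
    have hsplit : ∑ p : Fin d × Fin d, Complex.normSq (ψ p)
        = ∑ j' : Fin d, ∑ i : Fin d, Complex.normSq (ψ (i, j')) := by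
      rw [Fintype.sum_prod_type]
      exact Finset.sum_comm
    have hle : ∑ i : Fin d, Complex.normSq (ψ (i, j)) ≤ 1 := by
      rw [← hnorm, hsplit]
      exact Finset.single_le_sum
        (f := fun j' => ∑ i : Fin d, Complex.normSq (ψ (i, j')))
        (fun j' _ => Finset.sum_nonneg fun i _ => Complex.normSq_nonneg _)
        (Finset.mem_univ j)
    calc ∑ i, ‖cA j i‖ ^ 2 = ∑ i, Complex.normSq (ψ (i, j)) := by
          refine Finset.sum_congr rfl fun i _ => ?_
          rw [hcAapply, Complex.sq_norm]
      _ ≤ 1 := hle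
  set Bm : Matrix (Fin d) (Fin r) ℂ :=
    Matrix.of fun i k => if h : (k : ℕ) < n' then ((b ⟨k, h⟩ : V) : E) i else 0 with hBm
  set Cm : Matrix (Fin r) (Fin d) ℂ :=
    Matrix.of fun k j => if h : (k : ℕ) < n' then
      (inner (𝕜 := ℂ) ((b ⟨k, h⟩ : V) : E) (cA j)) else 0 with hCm
  refine ⟨Bm, Cm, ?_, ?_, ?_⟩
  · intro i k
    simp only [hBm, Matrix.of_apply]
    split
    · exact (euclid_apply_le_norm _ i).trans (le_of_eq (hbnorm _))
    · simp
  · intro k j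
    simp only [hCm, Matrix.of_apply]
    split
    · calc ‖_‖ ≤ ‖((b _ : V) : E)‖ * ‖cA j‖ := norm_inner_le_norm _ _
        _ ≤ 1 * 1 := by
            apply mul_le_mul (le_of_eq (hbnorm _)) (hcAnorm j) (norm_nonneg _)
            norm_num
        _ = 1 := by norm_num
    · simp
  · intro i j
    have hterm : ∀ k : Fin r,
        Bm i k * Cm k j
        = if h : (k : ℕ) < n' then
            (inner (𝕜 := ℂ) ((b ⟨k, h⟩ : V) : E) (cA j)) * ((b ⟨k, h⟩ : V) : E) i else 0 := by
      intro k
      by_cases h : (k : ℕ) < n' <;> simp [hBm, hCm, h, mul_comm]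
    have hmul : (Bm * Cm) i j = ∑ k : Fin n',
        (inner (𝕜 := ℂ) ((b k : V) : E) (cA j)) * ((b k : V) : E) i := by
      rw [Matrix.mul_apply, ← sum_fin_dite hn'r
        (g := fun k => (inner (𝕜 := ℂ) ((b k : V) : E) (cA j)) * ((b k : V) : E) i)]
      exact Finset.sum_congr rfl fun k _ => hterm k
    have h4 := congrArg (fun x : E => L x i) (hrepr j)
    simp only [map_sum, _root_.map_smul, WithLp.linearEquiv_apply,
      Finset.sum_apply, Pi.smul_apply, smul_eq_mul] at h4
    rw [hmul]
    have h5 : ψ (i, j) = L (cA j) i := (hcAapply j i).symm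
    rw [h5, h4]
    exact Finset.sum_congr rfl fun k _ => rfl

lemma SN_coe_smul {n m : Type*} (c : ℝ) (M : Matrix n m ℂ) : (c : ℂ) • M = c • M := by
  ext i j
  simp [Matrix.smul_apply, Complex.real_smul]

lemma SN_trace_vecMulVec {n : Type*} [Fintype n] (ψ : n → ℂ) :
    (Matrix.vecMulVec ψ (star ψ)).trace = ((∑ i, Complex.normSq (ψ i) : ℝ) : ℂ) := by
  rw [Matrix.trace]
  push_cast
  refine Finset.sum_congr rfl fun i _ => ?_
  rw [Matrix.diag_apply, Matrix.vecMulVec_apply, Pi.star_apply, Complex.star_def,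
    Complex.mul_conj]

lemma SN_posSemidef_vecMulVec {n : Type*} [Fintype n] [DecidableEq n] (ψ : n → ℂ) :
    (Matrix.vecMulVec ψ (star ψ)).PosSemidef := by
  rw [Matrix.vecMulVec_eq (Fin 1), ← Matrix.conjTranspose_replicateCol]
  exact Matrix.posSemidef_self_mul_conjTranspose _

lemma SN_posSemidef_real_smul {n : Type*} [Fintype n] {M : Matrix n n ℂ}
    (hM : M.PosSemidef) {c : ℝ} (hc : 0 ≤ c) : ((c : ℂ) • M).PosSemidef := by
  constructor
  · rw [Matrix.IsHermitian, Matrix.conjTranspose_smul, Complex.star_def, Complex.conj_ofReal,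
      hM.1]
  · intro x
    exact (hM.smul (Complex.zero_le_real.2 hc)).2 x

lemma SN_posSemidef_sum {n ι : Type*} [Fintype n] (s : Finset ι) (f : ι → Matrix n n ℂ)
    (h : ∀ i ∈ s, (f i).PosSemidef) : (∑ i ∈ s, f i).PosSemidef := by
  classical
  induction s using Finset.induction with
  | empty => simpa using Matrix.PosSemidef.zero
  | @insert a s ha ih =>
    rw [Finset.sum_insert ha]
    exact (h a (Finset.mem_insert_self a s)).add (ih fun i hi => h i (Finset.mem_insert_of_mem hi))


def SNset (d r : ℕ) : Set (Fin d × Fin d → ℂ) :=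
  {ψ | (∑ i, Complex.normSq (ψ i)) = 1 ∧ schmidtRank ψ ≤ r}

lemma SN_box_compact (m n : Type*) [Fintype m] [Fintype n] :
    IsCompact {B : Matrix m n ℂ | ∀ i k, ‖B i k‖ ≤ 1} ∧
    IsClosed {B : Matrix m n ℂ | ∀ i k, ‖B i k‖ ≤ 1} := by
  have heq : {B : Matrix m n ℂ | ∀ i k, ‖B i k‖ ≤ 1}
      = Set.univ.pi (fun _ : m => Set.univ.pi fun _ : n => Metric.closedBall (0 : ℂ) 1) := by
    ext B
    constructor
    · intro hB
      refine Set.mem_univ_pi.2 fun i => Set.mem_univ_pi.2 fun k => ?_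
      rw [Metric.mem_closedBall, dist_zero_right]
      exact hB i k
    · intro hB i k
      have := Set.mem_univ_pi.1 (Set.mem_univ_pi.1 hB i) k
      rwa [Metric.mem_closedBall, dist_zero_right] at this
  rw [heq]
  exact ⟨isCompact_univ_pi fun _ => isCompact_univ_pi fun _ => isCompact_closedBall _ _,
    isClosed_set_pi fun _ _ => isClosed_set_pi fun _ _ => Metric.isClosed_closedBall⟩

lemma SN_isCompact_SNset (d r : ℕ) : IsCompact (SNset d r) := by
  classical
  set h : Matrix (Fin d) (Fin r) ℂ × Matrix (Fin r) (Fin d) ℂ → (Fin d × Fin d → ℂ) :=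
    fun bc => fun p => (bc.1 * bc.2) p.1 p.2 with hh
  have hcont : Continuous h :=
    continuous_pi fun p => (continuous_fst.matrix_mul continuous_snd).matrix_elem p.1 p.2
  set Box : Set (Matrix (Fin d) (Fin r) ℂ × Matrix (Fin r) (Fin d) ℂ) :=
    {B : Matrix (Fin d) (Fin r) ℂ | ∀ i k, ‖B i k‖ ≤ 1} ×ˢ
    {C : Matrix (Fin r) (Fin d) ℂ | ∀ k j, ‖C k j‖ ≤ 1} with hBox
  set T : Set (Matrix (Fin d) (Fin r) ℂ × Matrix (Fin r) (Fin d) ℂ) :=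
    Box ∩ (fun bc => ∑ i, Complex.normSq (h bc i)) ⁻¹' {1} with hT
  have hgcont : Continuous fun bc => ∑ i, Complex.normSq (h bc i) :=
    continuous_finset_sum _ fun i _ =>
      Complex.continuous_normSq.comp ((continuous_apply i).comp hcont)
  have hBoxCompact : IsCompact Box := ((SN_box_compact _ _).1.prod (SN_box_compact _ _).1)
  have hBoxClosed : IsClosed Box := ((SN_box_compact _ _).2.prod (SN_box_compact _ _).2)
  have hTc : IsCompact T :=
    (hBoxCompact).of_isClosed_subset (hBoxClosed.inter (isClosed_singleton.preimage hgcont))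
      Set.inter_subset_left
  have him : SNset d r = h '' T := by
    ext ψ
    constructor
    · rintro ⟨hnorm, hrank⟩
      obtain ⟨B, C, hB, hC, hBC⟩ := exists_bounded_factorization ψ hnorm hrank
      have hψ : h (B, C) = ψ := by
        funext p
        rw [hh]
        simpa using hBC p.1 p.2
      refine ⟨(B, C), ⟨⟨hB, hC⟩, ?_⟩, hψ⟩
      simp only [Set.mem_preimage, Set.mem_singleton_iff, hψ]
      exact hnorm
    · rintro ⟨bc, ⟨⟨hB, hC⟩, hnrm⟩, rfl⟩
      refine ⟨hnrm, ?_⟩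
      have : (Matrix.of fun i j => h bc (i, j)) = bc.1 * bc.2 := rfl
      rw [schmidtRank, this]
      exact (Matrix.rank_mul_le_left _ _).trans
        ((Matrix.rank_le_card_width _).trans (by simp))
  rw [him]
  exact hTc.image hcont

/-- the set of density matrices with Schmidt number ≤ r is closed, hence compact. -/
theorem schmidt_states_closed_compact (d r : ℕ) :
    IsClosed {ρ : Matrix (Fin d × Fin d) (Fin d × Fin d) ℂ | IsDensity ρ ∧ SNle r ρ} ∧
    IsCompact {ρ : Matrix (Fin d × Fin d) (Fin d × Fin d) ℂ | IsDensity ρ ∧ SNle r ρ} := by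
  classical
  set N := Module.finrank ℝ (Matrix (Fin d × Fin d) (Fin d × Fin d) ℂ) + 1 with hN
  set S := SNset d r with hS
  set K : Set ((Fin N → ℝ) × (Fin N → Fin d × Fin d → ℂ)) :=
    (stdSimplex ℝ (Fin N)) ×ˢ (Set.univ.pi fun _ : Fin N => S) with hK
  have hKc : IsCompact K :=
    (isCompact_stdSimplex _ _).prod (isCompact_univ_pi fun _ => SN_isCompact_SNset d r)
  set F : (Fin N → ℝ) × (Fin N → Fin d × Fin d → ℂ) →
      Matrix (Fin d × Fin d) (Fin d × Fin d) ℂ :=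
    fun x => ∑ k, (x.1 k : ℂ) • Matrix.vecMulVec (x.2 k) (star (x.2 k)) with hF
  have hFc : Continuous F := by
    apply continuous_finset_sum
    intro k _
    refine Continuous.smul
      (Complex.continuous_ofReal.comp ((continuous_apply k).comp continuous_fst)) ?_
    refine continuous_matrix fun p q => ?_
    show Continuous fun x : (Fin N → ℝ) × (Fin N → Fin d × Fin d → ℂ) =>
      (x.2 k p) * star (x.2 k q)
    fun_prop
  have heq : {ρ : Matrix (Fin d × Fin d) (Fin d × Fin d) ℂ | IsDensity ρ ∧ SNle r ρ}
      = F '' K := by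
    ext ρ
    constructor
    · rintro ⟨⟨hpsd, htr⟩, M, p, ψ, hp0, hψn, hψr, hrep⟩
      have htrt : ∀ k, (Matrix.vecMulVec (ψ k) (star (ψ k))).trace = 1 := fun k => by
        rw [SN_trace_vecMulVec, hψn k, Complex.ofReal_one]
      have hsum : ∑ k, p k = 1 := by
        have h1 : ρ.trace = ((∑ k, p k : ℝ) : ℂ) := by
          rw [hrep, Matrix.trace_sum]
          push_cast
          refine Finset.sum_congr rfl fun k _ => ?_
          rw [Matrix.trace_smul, htrt k, smul_eq_mul, mul_one]
        rw [htr] at h1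
        exact_mod_cast h1.symm
      have hMpos : 0 < M := by
        rcases Nat.eq_zero_or_pos M with h | h
        · subst h; simp at hsum
        · exact h
      have hψ0 : ψ ⟨0, hMpos⟩ ∈ S := ⟨hψn _, hψr _⟩
      have hhull : ρ ∈ convexHull ℝ ((fun φ => Matrix.vecMulVec φ (star φ)) '' S) := by
        have hcm : ρ = Finset.univ.centerMass p
            (fun k => Matrix.vecMulVec (ψ k) (star (ψ k))) := by
          rw [Finset.centerMass_eq_of_sum_1 _ _ hsum, hrep]
          exact Finset.sum_congr rfl fun k _ => (SN_coe_smul (p k) _)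
        rw [hcm]
        exact Finset.centerMass_mem_convexHull _ (fun i _ => hp0 i)
          (by rw [hsum]; norm_num) (fun i _ => ⟨ψ i, ⟨hψn i, hψr i⟩, rfl⟩)
      obtain ⟨ι, hfin, z, w, hzP, haff, hw0, hw1, hzsum⟩ :=
        eq_pos_convex_span_of_mem_convexHull hhull
      letI : Fintype ι := hfin
      have hcard : Fintype.card ι ≤ N := by
        refine haff.card_le_finrank_succ.trans (Nat.add_le_add_right ?_ 1)
        exact Submodule.finrank_le _
      have hchoice : ∀ i : ι, ∃ φ, φ ∈ S ∧ Matrix.vecMulVec φ (star φ) = z i := fun i => by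
        obtain ⟨φ, hφ, hφe⟩ := hzP (Set.mem_range_self i)
        exact ⟨φ, hφ, hφe⟩
      choose φ hφS hφe using hchoice
      set c := Fintype.card ι with hc
      set e : Fin c ≃ ι := (Fintype.equivFin ι).symm with he
      set w' : Fin N → ℝ := fun k => if h : (k : ℕ) < c then w (e ⟨k, h⟩) else 0 with hw'
      set φ' : Fin N → (Fin d × Fin d → ℂ) :=
        fun k => if h : (k : ℕ) < c then φ (e ⟨k, h⟩) else ψ ⟨0, hMpos⟩ with hφ'
      have hterm : ∀ k : Fin N, ((w' k : ℝ) : ℂ) • Matrix.vecMulVec (φ' k) (star (φ' k))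
          = if h : (k : ℕ) < c then
              (w (e ⟨k, h⟩) : ℂ) • Matrix.vecMulVec (φ (e ⟨k, h⟩)) (star (φ (e ⟨k, h⟩)))
            else 0 := fun k => by
        by_cases h : (k : ℕ) < c <;> simp [hw', hφ', h]
      have hFval : F (w', φ') = ρ := by
        show (∑ k : Fin N, ((w' k : ℝ) : ℂ) • Matrix.vecMulVec (φ' k) (star (φ' k))) = ρ
        rw [Finset.sum_congr rfl fun k _ => hterm k,
          sum_fin_dite hcard (fun k => (w (e k) : ℂ) •
            Matrix.vecMulVec (φ (e k)) (star (φ (e k)))),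
          Equiv.sum_comp e (fun i => (w i : ℂ) • Matrix.vecMulVec (φ i) (star (φ i))),
          ← hzsum]
        exact Finset.sum_congr rfl fun i _ => by rw [hφe i, SN_coe_smul]
      refine ⟨⟨w', φ'⟩, ⟨⟨fun k => ?_, ?_⟩, ?_⟩, hFval⟩
      · rw [hw']
        dsimp only
        split
        · exact le_of_lt (hw0 _)
        · exact le_refl _
      · rw [hw']
        rw [sum_fin_dite hcard (fun k => w (e k)), Equiv.sum_comp e w]
        exact hw1
      · refine Set.mem_univ_pi.2 fun k => ?_
        rw [hφ']
        dsimp only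
        split
        · exact hφS _
        · exact hψ0
    · rintro ⟨⟨w, ψs⟩, ⟨hw, hψs⟩, rfl⟩
      have hψsk : ∀ k, ψs k ∈ S := fun k => Set.mem_univ_pi.1 hψs k
      have hw0 : ∀ k, 0 ≤ w k := hw.1
      have hw1 : ∑ k, w k = 1 := hw.2
      refine ⟨⟨?_, ?_⟩, N, w, ψs, hw0, fun k => (hψsk k).1, fun k => (hψsk k).2, rfl⟩
      · exact SN_posSemidef_sum _ _ fun k _ =>
          SN_posSemidef_real_smul (SN_posSemidef_vecMulVec _) (hw0 k)
      · rw [hF]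
        dsimp only
        rw [Matrix.trace_sum]
        have : ∀ k : Fin N, ((w k : ℂ) • Matrix.vecMulVec (ψs k) (star (ψs k))).trace
            = (w k : ℂ) := fun k => by
          rw [Matrix.trace_smul, SN_trace_vecMulVec, (hψsk k).1, Complex.ofReal_one,
            smul_eq_mul, mul_one]
        rw [Finset.sum_congr rfl fun k _ => this k]
        push_cast
        exact_mod_cast congrArg (fun x : ℝ => (x : ℂ)) hw1
  have hcomp : IsCompact {ρ : Matrix (Fin d × Fin d) (Fin d × Fin d) ℂ |
      IsDensity ρ ∧ SNle r ρ} := by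
    rw [heq]
    exact hKc.image hFc
  exact ⟨hcomp.isClosed, hcomp⟩
end
end

section
/- The map Λ_k(X) = Tr(X)I_d - kX on M_d is r-positive but not (r+1)-positive if and only if 1/(r+1) < k ≤ 1/r (for r < d). -/
open Matrix BigOperators Kronecker
open scoped ComplexOrder

noncomputable section

-- ===================== auxiliary lemmas =====================

section Aux
open Module

lemma cs_complex {ι : Type*} [Fintype ι] (a b : ι → ℂ) :
    Complex.normSq (∑ i, a i * b i) ≤ (∑ i, Complex.normSq (a i)) * (∑ i, Complex.normSq (b i)) := by
  have h1 : ‖∑ i, a i * b i‖ ≤ ∑ i, ‖a i‖ * ‖b i‖ := by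
    simpa [norm_mul] using (norm_sum_le Finset.univ (fun i => a i * b i))
  have h2 : (∑ i, ‖a i‖ * ‖b i‖)^2 ≤
      (∑ i, ‖a i‖^2) * (∑ i, ‖b i‖^2) :=
    Finset.sum_mul_sq_le_sq_mul_sq _ _ _
  calc Complex.normSq (∑ i, a i * b i) = ‖∑ i, a i * b i‖ ^ 2 := (Complex.sq_norm _).symm
    _ ≤ (∑ i, ‖a i‖ * ‖b i‖)^2 := by
        apply pow_le_pow_left₀ (norm_nonneg _) h1
    _ ≤ (∑ i, ‖a i‖^2) * (∑ i, ‖b i‖^2) := h2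
    _ = _ := by simp [Complex.sq_norm]

lemma norm_sq_eucl {d : ℕ} (w : EuclideanSpace ℂ (Fin d)) : ‖w‖^2 = ∑ x, Complex.normSq (w x) := by
  rw [EuclideanSpace.norm_eq, Real.sq_sqrt (by positivity)]
  simp [Complex.sq_norm]

open scoped InnerProductSpace in
lemma keyLemma {m d : ℕ} (φ ψ : Fin m × Fin d → ℂ) :
    Complex.normSq (∑ a : Fin m, ∑ x : Fin d, φ (a, x) * ψ (a, x)) ≤
      (m : ℝ) * ∑ x : Fin d, ∑ z : Fin d, Complex.normSq (∑ a : Fin m, φ (a, x) * ψ (a, z)) := by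
  classical
  let g : Fin m → EuclideanSpace ℂ (Fin d) := fun a => WithLp.toLp 2 (fun x => φ (a, x))
  let V : Submodule ℂ (EuclideanSpace ℂ (Fin d)) := Submodule.span ℂ (Set.range g)
  let b := stdOrthonormalBasis ℂ V
  set n := finrank ℂ V with hn
  let u : Fin n → EuclideanSpace ℂ (Fin d) := fun i => (b i : EuclideanSpace ℂ (Fin d))
  have hnm : n ≤ m := by
    simpa [Set.finrank] using finrank_range_le_card (R := ℂ) g
  have hu : Orthonormal ℂ u := by
    have h := b.orthonormal
    constructor
    · intro i; exact h.1 i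
    · intro i j hij; simpa [Submodule.coe_inner] using h.2 hij
  let t : Fin d → EuclideanSpace ℂ (Fin d) := fun z => WithLp.toLp 2 (fun x => ∑ a, φ (a, x) * ψ (a, z))
  have htV : ∀ z, t z ∈ V := by
    intro z
    have ht : t z = ∑ a, ψ (a, z) • g a := by
      apply PiLp.ext
      intro x
      rw [WithLp.ofLp_sum, Finset.sum_apply x Finset.univ (fun a => (ψ (a, z) • g a).ofLp)]
      show (∑ a, φ (a, x) * ψ (a, z)) = _
      simp only [PiLp.smul_apply, smul_eq_mul]
      exact Finset.sum_congr rfl fun a _ => mul_comm _ _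
    rw [ht]
    exact Submodule.sum_mem V fun a _ =>
      Submodule.smul_mem V _ (Submodule.subset_span ⟨a, rfl⟩)
  have hexp : ∀ z x, t z x = ∑ i, ⟪u i, t z⟫_ℂ * u i x := by
    intro z x
    have h := b.sum_repr' (⟨t z, htV z⟩ : V)
    have h2 := congrArg (V.subtype) h
    simp only [map_sum, _root_.map_smul, Submodule.coe_inner, Submodule.coe_subtype] at h2
    have h3 : (∑ i, ⟪u i, t z⟫_ℂ • u i) = t z := h2
    have h4 := congrArg (fun v : EuclideanSpace ℂ (Fin d) => v x) h3
    simp only [WithLp.ofLp_sum, Finset.sum_apply] at h4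
    simp only [PiLp.smul_apply, smul_eq_mul] at h4
    exact h4.symm
  let c : Fin n → ℂ := fun i => ∑ z, ⟪u i, t z⟫_ℂ * u i z
  have hS : (∑ a : Fin m, ∑ x : Fin d, φ (a, x) * ψ (a, x)) = ∑ i, c i := by
    calc ∑ a : Fin m, ∑ x : Fin d, φ (a, x) * ψ (a, x)
        = ∑ z, t z z := by rw [Finset.sum_comm]
      _ = ∑ z, ∑ i, ⟪u i, t z⟫_ℂ * u i z := by
          exact Finset.sum_congr rfl fun z _ => hexp z z
      _ = ∑ i, c i := Finset.sum_comm
  have hb1 : ∀ i, ∑ z, Complex.normSq (u i z) = 1 := by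
    intro i
    have : ‖u i‖ = 1 := hu.1 i
    rw [← norm_sq_eucl]
    rw [this]; norm_num
  have hci : ∀ i, Complex.normSq (c i) ≤ ∑ z, Complex.normSq (⟪u i, t z⟫_ℂ) := by
    intro i
    have h := cs_complex (fun z => ⟪u i, t z⟫_ℂ) (fun z => u i z)
    rw [hb1 i, mul_one] at h
    exact h
  have hbessel : ∀ z, ∑ i, Complex.normSq (⟪u i, t z⟫_ℂ) ≤ ∑ x, Complex.normSq (t z x) := by
    intro z
    have h := hu.sum_inner_products_le (t z) (s := Finset.univ)
    rw [norm_sq_eucl] at h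
    calc ∑ i, Complex.normSq (⟪u i, t z⟫_ℂ) = ∑ i, ‖⟪u i, t z⟫_ℂ‖^2 := by
          simp [Complex.sq_norm]
      _ ≤ _ := h
  have hfinal : ∑ i, Complex.normSq (c i) ≤
      ∑ x : Fin d, ∑ z : Fin d, Complex.normSq (∑ a : Fin m, φ (a, x) * ψ (a, z)) := by
    calc ∑ i, Complex.normSq (c i) ≤ ∑ i, ∑ z, Complex.normSq (⟪u i, t z⟫_ℂ) :=
          Finset.sum_le_sum fun i _ => hci i
      _ = ∑ z, ∑ i, Complex.normSq (⟪u i, t z⟫_ℂ) := Finset.sum_comm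
      _ ≤ ∑ z, ∑ x, Complex.normSq (t z x) := Finset.sum_le_sum fun z _ => hbessel z
      _ = _ := Finset.sum_comm
  have hnonneg : (0:ℝ) ≤ ∑ x : Fin d, ∑ z : Fin d, Complex.normSq (∑ a : Fin m, φ (a, x) * ψ (a, z)) :=
    Finset.sum_nonneg fun x _ => Finset.sum_nonneg fun z _ => Complex.normSq_nonneg _
  calc Complex.normSq (∑ a : Fin m, ∑ x : Fin d, φ (a, x) * ψ (a, x))
      = Complex.normSq (∑ i, c i * 1) := by rw [hS]; simp
    _ ≤ (∑ i, Complex.normSq (c i)) * (∑ i : Fin n, Complex.normSq (1:ℂ)) := cs_complex c 1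
    _ = (∑ i, Complex.normSq (c i)) * n := by simp [mul_comm]
    _ ≤ (∑ x : Fin d, ∑ z : Fin d, Complex.normSq (∑ a : Fin m, φ (a, x) * ψ (a, z))) * n := by
        exact mul_le_mul_of_nonneg_right hfinal (Nat.cast_nonneg n)
    _ ≤ (∑ x : Fin d, ∑ z : Fin d, Complex.normSq (∑ a : Fin m, φ (a, x) * ψ (a, z))) * m := by
        apply mul_le_mul_of_nonneg_left _ hnonneg
        exact_mod_cast hnm
    _ = _ := mul_comm _ _

lemma redMap_isLinear (d : ℕ) (k : ℝ) : IsLinearMap ℂ (redMap d k) := by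
  constructor
  · intro X Y
    simp only [redMap, Matrix.trace_add, add_smul, smul_add]
    abel
  · intro c X
    simp only [redMap, Matrix.trace_smul, smul_eq_mul, smul_smul, smul_sub]
    rw [mul_comm ((k:ℂ)) c]

lemma idTensor_redMap_apply {d m : ℕ} (k : ℝ) (σ : Matrix (Fin m × Fin d) (Fin m × Fin d) ℂ)
    (p q : Fin m × Fin d) :
    idTensor (redMap d k) σ p q =
      (if p.2 = q.2 then ∑ z, σ (p.1, z) (q.1, z) else 0) - (k : ℂ) * σ p q := by
  obtain ⟨a, x⟩ := p; obtain ⟨b, y⟩ := q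
  simp [idTensor, redMap, Matrix.trace, Matrix.diag, Matrix.sub_apply, Matrix.smul_apply,
    Matrix.one_apply, smul_eq_mul, mul_ite, mul_one, mul_zero]

lemma idTensor_redMap_isHermitian {d m : ℕ} (k : ℝ) {σ : Matrix (Fin m × Fin d) (Fin m × Fin d) ℂ}
    (hσ : σ.IsHermitian) : (idTensor (redMap d k) σ).IsHermitian := by
  ext p q
  rw [Matrix.conjTranspose_apply, idTensor_redMap_apply, idTensor_redMap_apply]
  have hs : ∀ i j, (starRingEnd ℂ) (σ i j) = σ j i := fun i j => hσ.apply j i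
  by_cases h : p.2 = q.2
  · simp [h, star_sub, star_mul', Complex.conj_ofReal, hs]
  · simp [h, Ne.symm h, star_sub, star_mul', Complex.conj_ofReal, hs]

lemma dot_self_eq {ι : Type*} [Fintype ι] (w : ι → ℂ) :
    star w ⬝ᵥ w = ((∑ j, Complex.normSq (w j) : ℝ) : ℂ) := by
  push_cast
  simp [dotProduct, Complex.normSq_eq_conj_mul_self]

lemma quadform_eq {ι κ : Type*} [Fintype ι] [Fintype κ] (B : Matrix κ ι ℂ) (v : ι → ℂ) :
    star v ⬝ᵥ ((Bᴴ * B) *ᵥ v) = ((∑ j, Complex.normSq ((B *ᵥ v) j) : ℝ) : ℂ) := by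
  rw [← Matrix.mulVec_mulVec, Matrix.dotProduct_mulVec, ← Matrix.star_mulVec, ← dot_self_eq]

lemma redMap_form {d m : ℕ} (k : ℝ) (B : Matrix (Fin m × Fin d) (Fin m × Fin d) ℂ)
    (φ : Fin m × Fin d → ℂ) :
    star φ ⬝ᵥ (idTensor (redMap d k) (Bᴴ * B) *ᵥ φ) =
      ((∑ j : Fin m × Fin d, ∑ x : Fin d, ∑ z : Fin d,
          Complex.normSq (∑ a : Fin m, B j (a, z) * φ (a, x)) : ℝ) : ℂ)
        - (k : ℂ) * ((∑ j : Fin m × Fin d, Complex.normSq (∑ p, B j p * φ p) : ℝ) : ℂ) := by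
  classical
  set σ : Matrix (Fin m × Fin d) (Fin m × Fin d) ℂ := Bᴴ * B with hσdef
  set B' : Matrix ((Fin m × Fin d) × Fin d) (Fin m) ℂ :=
    Matrix.of (fun jz a => B jz.1 (a, jz.2)) with hB'def
  set φcol : Fin d → (Fin m → ℂ) := fun x a => φ (a, x) with hφcol
  have hB' : ∀ a b, (B'ᴴ * B') a b = ∑ z, σ (a, z) (b, z) := by
    intro a b
    rw [Matrix.mul_apply]
    rw [Fintype.sum_prod_type]
    rw [Finset.sum_comm]
    refine Finset.sum_congr rfl fun z _ => ?_
    rw [hσdef, Matrix.mul_apply]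
    refine Finset.sum_congr rfl fun j _ => ?_
    simp [hB'def, Matrix.conjTranspose_apply]
  have hS2 : star φ ⬝ᵥ (σ *ᵥ φ) =
      ((∑ j : Fin m × Fin d, Complex.normSq (∑ p, B j p * φ p) : ℝ) : ℂ) := by
    rw [hσdef, quadform_eq]
    rfl
  have hS1 : ∀ x, star (φcol x) ⬝ᵥ ((B'ᴴ * B') *ᵥ (φcol x)) =
      ((∑ jz : (Fin m × Fin d) × Fin d,
        Complex.normSq (∑ a : Fin m, B jz.1 (a, jz.2) * φ (a, x)) : ℝ) : ℂ) := by
    intro x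
    rw [quadform_eq]
    rfl
  have hMain : star φ ⬝ᵥ (idTensor (redMap d k) σ *ᵥ φ)
      = (∑ x, star (φcol x) ⬝ᵥ ((B'ᴴ * B') *ᵥ (φcol x))) - (k:ℂ) * (star φ ⬝ᵥ (σ *ᵥ φ)) := by
    have h1 : ∀ p, (idTensor (redMap d k) σ *ᵥ φ) p
        = (∑ b, (∑ z, σ (p.1, z) (b, z)) * φ (b, p.2)) - (k:ℂ) * ((σ *ᵥ φ) p) := by
      intro p
      show ∑ q, idTensor (redMap d k) σ p q * φ q = _
      rw [show (σ *ᵥ φ) p = ∑ q, σ p q * φ q from rfl]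
      simp only [idTensor_redMap_apply, sub_mul, Finset.sum_sub_distrib, Finset.mul_sum]
      congr 1
      · rw [Fintype.sum_prod_type]
        refine Finset.sum_congr rfl fun b _ => ?_
        simp
      · refine Finset.sum_congr rfl fun q _ => by ring
    calc star φ ⬝ᵥ (idTensor (redMap d k) σ *ᵥ φ)
        = ∑ p, (starRingEnd ℂ) (φ p) *
            ((∑ b, (∑ z, σ (p.1, z) (b, z)) * φ (b, p.2)) - (k:ℂ) * ((σ *ᵥ φ) p)) := by
          refine Finset.sum_congr rfl fun p _ => ?_
          rw [h1 p]
          rfl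
      _ = (∑ p, (starRingEnd ℂ) (φ p) * (∑ b, (∑ z, σ (p.1, z) (b, z)) * φ (b, p.2)))
            - (k:ℂ) * ∑ p, (starRingEnd ℂ) (φ p) * ((σ *ᵥ φ) p) := by
          rw [Finset.mul_sum, ← Finset.sum_sub_distrib]
          refine Finset.sum_congr rfl fun p _ => by ring
      _ = (∑ x, star (φcol x) ⬝ᵥ ((B'ᴴ * B') *ᵥ (φcol x))) - (k:ℂ) * (star φ ⬝ᵥ (σ *ᵥ φ)) := by
          congr 1
          rw [Fintype.sum_prod_type, Finset.sum_comm]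
          refine Finset.sum_congr rfl fun x _ => ?_
          show _ = ∑ a, (starRingEnd ℂ) (φcol x a) * (((B'ᴴ * B') *ᵥ (φcol x)) a)
          refine Finset.sum_congr rfl fun a _ => ?_
          congr 1
          rw [show (((B'ᴴ * B') *ᵥ (φcol x)) a) = ∑ b, (B'ᴴ * B') a b * φcol x b from rfl]
          refine Finset.sum_congr rfl fun b _ => ?_
          rw [hB']
  rw [hMain, hS2]
  congr 1
  rw [Finset.sum_congr rfl fun x (_ : x ∈ Finset.univ) => hS1 x]
  rw [← Complex.ofReal_sum]
  congr 1
  rw [Finset.sum_comm, Fintype.sum_prod_type]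
  exact Finset.sum_congr rfl fun j _ => Finset.sum_comm

/-- Sufficiency: `Λ_k` is `m`-positive when `k ≤ 1/m`. -/
lemma redMap_rPositive_of_le {d m : ℕ} {k : ℝ} (hm : 1 ≤ m) (hk : k ≤ 1 / (m : ℝ)) :
    rPositive m (redMap d k) := by
  refine ⟨redMap_isLinear d k, fun σ hσ => ?_⟩
  have hσH := hσ.1
  open scoped MatrixOrder in obtain ⟨B, hB⟩ := CStarAlgebra.nonneg_iff_eq_star_mul_self.mp hσ.nonneg
  rw [Matrix.star_eq_conjTranspose] at hB
  subst hB
  refine Matrix.PosSemidef.of_dotProduct_mulVec_nonneg (idTensor_redMap_isHermitian k hσH) fun φ => ?_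
  rw [redMap_form]
  set R1 : ℝ := ∑ j : Fin m × Fin d, ∑ x : Fin d, ∑ z : Fin d,
      Complex.normSq (∑ a : Fin m, B j (a, z) * φ (a, x)) with hR1
  set R2 : ℝ := ∑ j : Fin m × Fin d, Complex.normSq (∑ p, B j p * φ p) with hR2
  have hR1n : 0 ≤ R1 := Finset.sum_nonneg fun j _ => Finset.sum_nonneg fun x _ =>
    Finset.sum_nonneg fun z _ => Complex.normSq_nonneg _
  have hR2n : 0 ≤ R2 := Finset.sum_nonneg fun j _ => Complex.normSq_nonneg _
  have hkey : R2 ≤ (m:ℝ) * R1 := by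
    rw [hR1, hR2, Finset.mul_sum]
    refine Finset.sum_le_sum fun j _ => ?_
    calc Complex.normSq (∑ p, B j p * φ p)
        = Complex.normSq (∑ a : Fin m, ∑ x : Fin d, φ (a,x) * B j (a,x)) := by
          rw [Fintype.sum_prod_type]
          congr 1
          exact Finset.sum_congr rfl fun a _ =>
            Finset.sum_congr rfl fun x _ => mul_comm _ _
      _ ≤ (m:ℝ) * ∑ x : Fin d, ∑ z : Fin d,
            Complex.normSq (∑ a : Fin m, φ (a,x) * B j (a,z)) := keyLemma _ _
      _ = (m:ℝ) * ∑ x : Fin d, ∑ z : Fin d,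
            Complex.normSq (∑ a : Fin m, B j (a,z) * φ (a,x)) := by
          congr 1
          refine Finset.sum_congr rfl fun x _ => Finset.sum_congr rfl fun z _ => ?_
          congr 1
          exact Finset.sum_congr rfl fun a _ => mul_comm _ _
  have hm0 : (0:ℝ) < m := by exact_mod_cast hm
  have hineq : 0 ≤ R1 - k * R2 := by
    have h1 : k * R2 ≤ (1/(m:ℝ)) * R2 := mul_le_mul_of_nonneg_right hk hR2n
    have h2 : (1/(m:ℝ)) * R2 ≤ (1/(m:ℝ)) * ((m:ℝ) * R1) :=
      mul_le_mul_of_nonneg_left hkey (by positivity)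
    have h3 : (1/(m:ℝ)) * ((m:ℝ) * R1) = R1 := by field_simp
    linarith
  have hcast : ((R1 - k * R2 : ℝ) : ℂ) = (R1:ℂ) - (k:ℂ) * (R2:ℂ) := by push_cast; ring
  rw [← hcast]
  exact Complex.zero_le_real.2 hineq

lemma outer_posSemidef {ι : Type*} [Fintype ι] [DecidableEq ι] (v : ι → ℂ) :
    (Matrix.vecMulVec v (star v)).PosSemidef := by
  rw [Matrix.vecMulVec_eq (Fin 1), ← Matrix.conjTranspose_replicateCol]
  exact Matrix.posSemidef_self_mul_conjTranspose _

/-- Necessity: if `Λ_k` is `m`-positive and `m ≤ d` then `k ≤ 1/m`. -/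
lemma redMap_not_rPositive {d m : ℕ} {k : ℝ} (hm : 1 ≤ m) (hmd : m ≤ d)
    (h : rPositive m (redMap d k)) : k ≤ 1 / (m : ℝ) := by
  classical
  set ψ : Fin m × Fin d → ℂ := fun p => if Fin.castLE hmd p.1 = p.2 then 1 else 0 with hψ
  set σ := Matrix.vecMulVec ψ (star ψ) with hσ
  have hψψ : ∑ p, (starRingEnd ℂ) (ψ p) * ψ p = (m : ℂ) := by
    rw [Fintype.sum_prod_type]
    have : ∀ a : Fin m, ∑ x : Fin d, (starRingEnd ℂ) (ψ (a, x)) * ψ (a, x) = 1 := by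
      intro a
      simp [hψ, apply_ite (starRingEnd ℂ)]
    rw [Finset.sum_congr rfl fun a _ => this a]
    simp
  have hκ : ∀ a b : Fin m, ∑ z, σ (a, z) (b, z) = if a = b then 1 else 0 := by
    intro a b
    simp only [hσ, Matrix.vecMulVec_apply, Pi.star_apply, hψ]
    simp [apply_ite (starRingEnd ℂ), ite_mul, Finset.sum_ite_eq]
  have hform := (h.2 σ (outer_posSemidef ψ)).dotProduct_mulVec_nonneg ψ
  have hval : star ψ ⬝ᵥ (idTensor (redMap d k) σ *ᵥ ψ) = (((m : ℝ) - k * (m:ℝ)^2 : ℝ) : ℂ) := by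
    have hA : ∀ p : Fin m × Fin d, (idTensor (redMap d k) σ *ᵥ ψ) p
        = (if Fin.castLE hmd p.1 = p.2 then 1 else 0) - (k : ℂ) * (ψ p * (m : ℂ)) := by
      intro p
      show ∑ q, idTensor (redMap d k) σ p q * ψ q = _
      simp only [idTensor_redMap_apply, sub_mul, Finset.sum_sub_distrib]
      congr 1
      · rw [Fintype.sum_prod_type]
        rw [Finset.sum_comm]
        calc ∑ y : Fin d, ∑ b : Fin m, (if p.2 = y then ∑ z, σ (p.1, z) (b, z) else 0) * ψ (b, y)
            = ∑ b : Fin m, (∑ z, σ (p.1, z) (b, z)) * ψ (b, p.2) := by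
              rw [Finset.sum_comm]
              refine Finset.sum_congr rfl fun b _ => ?_
              simp
          _ = ∑ b : Fin m, (if p.1 = b then 1 else 0) * ψ (b, p.2) := by
              refine Finset.sum_congr rfl fun b _ => by rw [hκ]
          _ = ψ (p.1, p.2) := by simp
          _ = if Fin.castLE hmd p.1 = p.2 then 1 else 0 := by rw [hψ]
      · have : ∀ q, (k:ℂ) * σ p q * ψ q = (k:ℂ) * (ψ p * ((starRingEnd ℂ) (ψ q) * ψ q)) := by
          intro q
          simp only [hσ, Matrix.vecMulVec_apply, Pi.star_apply, Complex.star_def]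
          ring
        rw [Finset.sum_congr rfl fun q _ => this q]
        rw [← Finset.mul_sum, ← Finset.mul_sum, hψψ]
    calc star ψ ⬝ᵥ (idTensor (redMap d k) σ *ᵥ ψ)
        = ∑ p, (starRingEnd ℂ) (ψ p) *
            ((if Fin.castLE hmd p.1 = p.2 then 1 else 0) - (k : ℂ) * (ψ p * (m : ℂ))) := by
          exact Finset.sum_congr rfl fun p _ => by rw [hA p]; rfl
      _ = (∑ p, (starRingEnd ℂ) (ψ p) * ψ p)
            - (k:ℂ) * (m:ℂ) * ∑ p, (starRingEnd ℂ) (ψ p) * ψ p := by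
          rw [Finset.mul_sum, ← Finset.sum_sub_distrib]
          refine Finset.sum_congr rfl fun p _ => ?_
          have : (if Fin.castLE hmd p.1 = p.2 then (1:ℂ) else 0) = ψ p := by rw [hψ]
          rw [this]; ring
      _ = (((m : ℝ) - k * (m:ℝ)^2 : ℝ) : ℂ) := by rw [hψψ]; push_cast; ring
  rw [hval] at hform
  rw [Complex.zero_le_real] at hform
  have hm0 : (0:ℝ) < m := by exact_mod_cast hm
  rw [le_div_iff₀ hm0]
  nlinarith

end Aux

/-- `Λ_k(X) = Tr(X)I - kX` is r-positive but not (r+1)-positive iff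
`1/(r+1) < k ≤ 1/r` (for `r < d`). -/
theorem redMap_rPositive_iff {d r : ℕ} (hr : 1 ≤ r) (hrd : r < d) (k : ℝ) :
    (rPositive r (redMap d k) ∧ ¬ rPositive (r + 1) (redMap d k)) ↔
      (1 / ((r : ℝ) + 1) < k ∧ k ≤ 1 / (r : ℝ)) := by
  have hrd' : r + 1 ≤ d := hrd
  have hcast : ((r + 1 : ℕ) : ℝ) = (r : ℝ) + 1 := by push_cast; ring
  constructor
  · rintro ⟨h1, h2⟩
    refine ⟨?_, redMap_not_rPositive hr (le_of_lt hrd) h1⟩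
    by_contra hle
    push_neg at hle
    exact h2 (redMap_rPositive_of_le (by omega) (by rw [hcast]; exact hle))
  · rintro ⟨h1, h2⟩
    refine ⟨redMap_rPositive_of_le hr h2, fun hpos => ?_⟩
    have := redMap_not_rPositive (m := r + 1) (by omega) hrd' hpos
    rw [hcast] at this
    linarith
end
end
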